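/- arXiv:2511.03744 — 2 statements merged into one kernel-verified Lean document; each statement's English description precedes it below -/
import Mathlib

section
/- Assume ‖A_k‖₂ ≤ β < 1 for all k, ‖Φ_k‖₂ ≤ σ₀², and ‖C_k‖₂ ≤ (c·‖B‖₂·ρ/(1-βρ))·σ₀² with c ≥ 1, ρ ∈ [0,1). If Σ_0 = 0 and Σ_{k+1} = A_k Σ_k A_k^⊤ + B Φ_k B^⊤ + A_k C_k B^⊤ + B C_k^⊤ A_k^⊤, then for all k, ‖Σ_k‖₂ ≤ C₂·σ₀², where C₂ = (1 + C₁)·‖B‖₂²/(1-β²) and C₁ = 2cβρ/(1-βρ). In particular sup_k ‖Σ_k‖₂ = O(σ₀²). -/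
open scoped Matrix.Norms.L2Operator
open Matrix

/-!
Submultiplicativity and the triangle inequality turn the covariance recursion into the scalar
recursion `‖Σ_{k+1}‖ ≤ β² ‖Σ_k‖ + d` with `d = ‖B‖² σ₀² + 2β ‖B‖ · c‖B‖ρσ₀²/(1-βρ)`. Starting
from `Σ_0 = 0`, the norms stay below the fixed point `d / (1 - β²)`, which is exactly `C₂ σ₀²`.
-/

namespace Matrix

variable {m n l p : Type*} [Fintype m] [Fintype n] [Fintype l] [Fintype p]

lemma l2_opNorm_transpose [DecidableEq m] [DecidableEq n] (X : Matrix m n ℝ) : ‖Xᵀ‖ = ‖X‖ := by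
  rw [← conjTranspose_eq_transpose_of_trivial, l2_opNorm_conjTranspose]

lemma l2_opNorm_mul_mul_le [DecidableEq n] [DecidableEq l] [DecidableEq p]
    (X : Matrix m n ℝ) (Y : Matrix n l ℝ) (Z : Matrix l p ℝ) :
    ‖X * Y * Z‖ ≤ ‖X‖ * ‖Y‖ * ‖Z‖ :=
  (l2_opNorm_mul _ _).trans <| by gcongr; exact l2_opNorm_mul _ _

lemma l2_opNorm_covariance_step_le [DecidableEq m] [DecidableEq n]
    (A S : Matrix n n ℝ) (B : Matrix n m ℝ) (Φ : Matrix m m ℝ) (C : Matrix n m ℝ) :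
    ‖A * S * Aᵀ + B * Φ * Bᵀ + A * C * Bᵀ + B * Cᵀ * Aᵀ‖ ≤
      ‖A‖ ^ 2 * ‖S‖ + ‖B‖ ^ 2 * ‖Φ‖ + 2 * ‖A‖ * ‖B‖ * ‖C‖ := by
  have hASA := l2_opNorm_mul_mul_le A S Aᵀ
  have hBΦB := l2_opNorm_mul_mul_le B Φ Bᵀ
  have hACB := l2_opNorm_mul_mul_le A C Bᵀ
  have hBCA := l2_opNorm_mul_mul_le B Cᵀ Aᵀ
  simp only [l2_opNorm_transpose] at hASA hBΦB hACB hBCA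
  calc _ ≤ ‖A * S * Aᵀ‖ + ‖B * Φ * Bᵀ‖ + ‖A * C * Bᵀ‖ + ‖B * Cᵀ * Aᵀ‖ := norm_add₄_le
    _ ≤ _ := by linarith

end Matrix

lemma le_div_one_sub_of_le_mul_add {x : ℕ → ℝ} {a d : ℝ} (ha0 : 0 ≤ a) (ha1 : a < 1)
    (h0 : x 0 ≤ d / (1 - a)) (hstep : ∀ k, x (k + 1) ≤ a * x k + d) :
    ∀ k, x k ≤ d / (1 - a) := by
  have hfix : a * (d / (1 - a)) + d = d / (1 - a) := by
    field_simp [(sub_pos.2 ha1).ne']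
    ring
  intro k
  induction k with
  | zero => exact h0
  | succ k ih => calc
      x (k + 1) ≤ a * x k + d := hstep k
      _ ≤ a * (d / (1 - a)) + d := by gcongr
      _ = d / (1 - a) := hfix

theorem state_covariance_uniform_bound_general
    {n m : ℕ} (A : ℕ → Matrix (Fin n) (Fin n) ℝ) (B : Matrix (Fin n) (Fin m) ℝ)
    (Φ : ℕ → Matrix (Fin m) (Fin m) ℝ) (C : ℕ → Matrix (Fin n) (Fin m) ℝ)
    (Sig : ℕ → Matrix (Fin n) (Fin n) ℝ)
    (c β ρ σ0 : ℝ) (hc : 1 ≤ c) (hβ1 : β < 1)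
    (hρ0 : 0 ≤ ρ) (hρ1 : ρ < 1)
    (hA : ∀ k, ‖A k‖ ≤ β)
    (hΦ : ∀ k, ‖Φ k‖ ≤ σ0 ^ 2)
    (hC : ∀ k, ‖C k‖ ≤ (c * ‖B‖ * ρ / (1 - β * ρ)) * σ0 ^ 2)
    (h0 : Sig 0 = 0)
    (hrec : ∀ k, Sig (k + 1) =
      A k * Sig k * (A k)ᵀ + B * Φ k * Bᵀ + A k * C k * Bᵀ + B * (C k)ᵀ * (A k)ᵀ) :
    ∀ k, ‖Sig k‖ ≤
      ((1 + 2 * c * β * ρ / (1 - β * ρ)) * ‖B‖ ^ 2 / (1 - β ^ 2)) * σ0 ^ 2 := by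
  have hβ0 : 0 ≤ β := (norm_nonneg _).trans (hA 0)
  have hβρ : 0 < 1 - β * ρ := by nlinarith
  have hβ2 : 0 < 1 - β ^ 2 := by nlinarith
  set K := c * ‖B‖ * ρ / (1 - β * ρ) * σ0 ^ 2
  have hK : 0 ≤ K := by
    have : 0 ≤ c := by linarith
    positivity
  set d := ‖B‖ ^ 2 * σ0 ^ 2 + 2 * β * ‖B‖ * K
  have hstep (k : ℕ) : ‖Sig (k + 1)‖ ≤ β ^ 2 * ‖Sig k‖ + d := by
    rw [hrec k]
    refine (l2_opNorm_covariance_step_le _ _ _ _ _).trans ?_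
    have hASA : ‖A k‖ ^ 2 * ‖Sig k‖ ≤ β ^ 2 * ‖Sig k‖ := by gcongr; exact hA k
    have hBΦB : ‖B‖ ^ 2 * ‖Φ k‖ ≤ ‖B‖ ^ 2 * σ0 ^ 2 := by gcongr; exact hΦ k
    have hcross : 2 * ‖A k‖ * ‖B‖ * ‖C k‖ ≤ 2 * β * ‖B‖ * K := by gcongr; exacts [hA k, hC k]
    linarith
  have hbase : ‖Sig 0‖ ≤ d / (1 - β ^ 2) := by
    rw [h0, norm_zero]
    positivity
  have hbound := le_div_one_sub_of_le_mul_add (x := fun k ↦ ‖Sig k‖) (sq_nonneg β)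
    (by nlinarith) hbase hstep
  convert hbound using 2
  simp only [d, K]
  field_simp

/-- Uniform boundedness and `O(σ₀²)` scaling of the state covariance under
Schur-stable time-varying closed-loop dynamics driven by an AR(1) deviation:
`‖Σ_k‖₂ ≤ C₂ σ₀²` with `C₂ = (1 + C₁) ‖B‖₂² / (1 - β²)`, `C₁ = 2cβρ/(1-βρ)`. -/
theorem state_covariance_uniform_bound
    {n m : ℕ} (A : ℕ → Matrix (Fin n) (Fin n) ℝ) (B : Matrix (Fin n) (Fin m) ℝ)
    (Φ : ℕ → Matrix (Fin m) (Fin m) ℝ) (C : ℕ → Matrix (Fin n) (Fin m) ℝ)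
    (Sig : ℕ → Matrix (Fin n) (Fin n) ℝ)
    (c β ρ σ0 : ℝ) (hc : 1 ≤ c) (hβ0 : 0 < β) (hβ1 : β < 1)
    (hρ0 : 0 ≤ ρ) (hρ1 : ρ < 1)
    (hA : ∀ k, ‖A k‖ ≤ β)
    (hΦ : ∀ k, ‖Φ k‖ ≤ σ0 ^ 2)
    (hC : ∀ k, ‖C k‖ ≤ (c * ‖B‖ * ρ / (1 - β * ρ)) * σ0 ^ 2)
    (h0 : Sig 0 = 0)
    (hrec : ∀ k, Sig (k + 1) =
      A k * Sig k * (A k)ᵀ + B * Φ k * Bᵀ + A k * C k * Bᵀ + B * (C k)ᵀ * (A k)ᵀ) :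
    ∀ k, ‖Sig k‖ ≤
      ((1 + 2 * c * β * ρ / (1 - β * ρ)) * ‖B‖ ^ 2 / (1 - β ^ 2)) * σ0 ^ 2 :=
  state_covariance_uniform_bound_general A B Φ C Sig c β ρ σ0 hc hβ1 hρ0 hρ1 hA hΦ hC h0 hrec
end

section
/- In the setting above with R ≻ 0, Ψ ⪰ 0, if Γ ≠ 0 and Ψ ≻ 0 and KΓ ≠ 0, then J(L*) < J(0), i.e., the optimal gain strictly reduces the quadratic cost relative to no compensation (L = 0). -/
open Matrix

open scoped MatrixOrder ComplexOrder

/-!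
With `C = K Γ`, the cost at `L* = -C Ψ⁻¹` is `-tr(Ψ⁻¹ Cᵀ R C)`, while `J 0 = 0`.
The trace of the product of a positive definite matrix `A = Yᴴ Y` and a nonzero positive
semidefinite matrix `B` is positive, since it equals the trace of the nonzero positive
semidefinite matrix `Y B Yᴴ`. Applied first to `R` and `C Cᵀ`, this shows `Cᵀ R C ≠ 0`, and
then to `Ψ⁻¹` and `Cᵀ R C`, it shows `tr(Ψ⁻¹ Cᵀ R C) > 0`.
-/

namespace Matrix

variable {m n p : Type*} [Fintype m] [Fintype n] [Fintype p]

section PosDef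

variable [DecidableEq n] {𝕜 : Type*} [RCLike 𝕜]

theorem PosDef.trace_mul_pos {A B : Matrix n n 𝕜} (hA : A.PosDef) (hB : B.PosSemidef)
    (hB0 : B ≠ 0) : 0 < (A * B).trace := by
  obtain ⟨Y, hY, rfl⟩ := CStarAlgebra.isStrictlyPositive_iff_eq_star_mul_self.mp
    hA.isStrictlyPositive
  have hYBY : (Y * B * Yᴴ).PosSemidef := hB.mul_mul_conjTranspose_same Y
  have hYBY0 : Y * B * Yᴴ ≠ 0 := by
    rwa [Ne, ← star_eq_conjTranspose, hY.star.mul_left_eq_zero, hY.mul_right_eq_zero]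
  rw [star_eq_conjTranspose, mul_assoc, trace_mul_comm]
  exact hYBY.trace_nonneg.lt_of_ne' (hYBY.trace_eq_zero_iff.not.mpr hYBY0)

theorem PosDef.conjTranspose_mul_mul_same_ne_zero {A : Matrix n n 𝕜} (hA : A.PosDef)
    {C : Matrix n m 𝕜} (hC : C ≠ 0) : Cᴴ * A * C ≠ 0 := by
  have hCC : C * Cᴴ ≠ 0 := fun h ↦
    hC (trace_mul_conjTranspose_self_eq_zero_iff.mp (by rw [h, trace_zero]))
  have htrace := hA.trace_mul_pos (posSemidef_self_mul_conjTranspose C) hCC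
  rw [← Matrix.mul_assoc, trace_mul_comm, ← Matrix.mul_assoc] at htrace
  exact fun h ↦ htrace.ne' (by rw [h, trace_zero])

end PosDef

variable {α : Type*} [CommRing α]

def gainCost (R : Matrix m m α) (Ψ : Matrix p p α) (C : Matrix m p α) (L : Matrix m p α) : α :=
  (Lᵀ * R * L * Ψ).trace + 2 * (Lᵀ * R * C).trace

@[simp]
theorem gainCost_zero (R : Matrix m m α) (Ψ : Matrix p p α) (C : Matrix m p α) :
    gainCost R Ψ C 0 = 0 := by
  simp [gainCost]

theorem gainCost_neg_mul_inv [DecidableEq p] (R : Matrix m m α) {Ψ : Matrix p p α}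
    (hΨ : Ψᵀ = Ψ) (hΨu : IsUnit Ψ.det) (C : Matrix m p α) :
    gainCost R Ψ C (-(C * Ψ⁻¹)) = -(Ψ⁻¹ * (Cᵀ * R * C)).trace := by
  have hΨinv : (Ψ⁻¹)ᵀ = Ψ⁻¹ := by rw [transpose_nonsing_inv, hΨ]
  have hquad : -(Ψ⁻¹ * Cᵀ) * R * -(C * Ψ⁻¹) * Ψ = Ψ⁻¹ * (Cᵀ * R * C) * (Ψ⁻¹ * Ψ) := by
    simp only [Matrix.neg_mul, Matrix.mul_neg, neg_neg, Matrix.mul_assoc]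
  have hlin : -(Ψ⁻¹ * Cᵀ) * R * C = -(Ψ⁻¹ * (Cᵀ * R * C)) := by
    simp only [Matrix.neg_mul, Matrix.mul_assoc]
  rw [gainCost, transpose_neg, transpose_mul, hΨinv, hquad, hlin, nonsing_inv_mul Ψ hΨu, mul_one,
    trace_neg]
  ring

end Matrix

theorem strict_cost_reduction_general
    {m n p : ℕ} (R : Matrix (Fin m) (Fin m) ℝ) (Ψ : Matrix (Fin p) (Fin p) ℝ)
    (K : Matrix (Fin m) (Fin n) ℝ) (Γ : Matrix (Fin n) (Fin p) ℝ)
    (hR : R.PosDef) (hΨ : Ψ.PosDef) (hKΓ : K * Γ ≠ 0)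
    (J : Matrix (Fin m) (Fin p) ℝ → ℝ)
    (hJ : ∀ L, J L = (Lᵀ * R * L * Ψ).trace + 2 * (Lᵀ * R * K * Γ).trace) :
    J (-(K * Γ * Ψ⁻¹)) < J 0 := by
  have hJ' : ∀ L, J L = gainCost R Ψ (K * Γ) L := fun L ↦ by
    rw [hJ, gainCost, Matrix.mul_assoc _ K]
  have hCRC : ((K * Γ)ᵀ * R * (K * Γ)).PosSemidef := by
    simpa using hR.posSemidef.conjTranspose_mul_mul_same (K * Γ)
  have hCRC0 : (K * Γ)ᵀ * R * (K * Γ) ≠ 0 := by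
    simpa using hR.conjTranspose_mul_mul_same_ne_zero hKΓ
  have hΨT : Ψᵀ = Ψ := by simpa using hΨ.isHermitian.eq
  rw [hJ', hJ', gainCost_neg_mul_inv R hΨT hΨ.det_pos.ne'.isUnit, gainCost_zero, neg_lt_zero]
  exact hΨ.inv.trace_mul_pos hCRC hCRC0

/-- Strict cost reduction of predictive compensation over no compensation:
with `R ≻ 0`, `Ψ ≻ 0`, `Γ ≠ 0`, and `K Γ ≠ 0`, the optimal gain
`L* = -K Γ Ψ⁻¹` satisfies `J(L*) < J(0)`. -/
theorem strict_cost_reduction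
    {m n p : ℕ} (R : Matrix (Fin m) (Fin m) ℝ) (Ψ : Matrix (Fin p) (Fin p) ℝ)
    (K : Matrix (Fin m) (Fin n) ℝ) (Γ : Matrix (Fin n) (Fin p) ℝ)
    (hR : R.PosDef) (hΨ : Ψ.PosDef) (hΓ : Γ ≠ 0) (hKΓ : K * Γ ≠ 0)
    (J : Matrix (Fin m) (Fin p) ℝ → ℝ)
    (hJ : ∀ L, J L = (Lᵀ * R * L * Ψ).trace + 2 * (Lᵀ * R * K * Γ).trace) :
    J (-(K * Γ * Ψ⁻¹)) < J 0 :=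
  strict_cost_reduction_general R Ψ K Γ hR hΨ hKΓ J hJ
end
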